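/- Fix ω ∈ {0,1}^{𝔼^d}, η ∈ (ℝ₊)^{𝔼^d} and distinct points x, y ∈ ℤ^d. Suppose there exist a finite nonempty set C ⊆ ℤ^d with d(c,c') = 0 for all c, c' ∈ C (for instance the vertex set of a circuit of open edges all having passage time 0), and a finite set R ⊆ ℤ^d containing x and y, such that every path from x, and every path from y, to a vertex outside R ∪ C contains a vertex of C. Then the sets {z ∈ ℤ^d : d(x,z) < d(y,z)} and {z ∈ ℤ^d : d(x,z) > d(y,z)} are not both infinite; that is, Coex(x,y) does not hold in the configuration (ω,η). -/

import Mathlib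

open MeasureTheory Filter Set Topology
open scoped Classical
open scoped ENNReal NNReal

namespace GM

/-- Vertices of the grid `ℤ^d`. -/
abbrev V (d : ℕ) := Fin d → ℤ

/-- The `ℓ¹` norm of a point of `ℤ^d`. -/
def norm1 {d : ℕ} (x : V d) : ℕ := ∑ i, (x i).natAbs

/-- Two vertices are adjacent when they are at `ℓ¹`-distance 1. -/
def Adj {d : ℕ} (x y : V d) : Prop := norm1 (x - y) = 1

/-- An unordered pair of vertices is a grid edge if its endpoints are adjacent. -/
def IsGridEdge {d : ℕ} (e : Sym2 (V d)) : Prop := ∃ x y : V d, Adj x y ∧ e = s(x, y)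

/-- The set `𝔼^d` of edges of the grid `ℤ^d`. -/
def Edge (d : ℕ) : Type := {e : Sym2 (V d) // IsGridEdge e}

/-- The edge joining two adjacent vertices. -/
def edgeMk {d : ℕ} {x y : V d} (h : Adj x y) : Edge d := ⟨s(x, y), x, y, h, rfl⟩

/-- Environments: `Ω_E = {0,1}^{𝔼^d}`. -/
abbrev ΩE (d : ℕ) := Edge d → Bool

/-- Passage-time configurations: `Ω_S = (ℝ₊)^{𝔼^d}`. -/
abbrev ΩS (d : ℕ) := Edge d → ℝ≥0

/-- Translation of an edge by a vector `u`. -/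
def shiftEdge {d : ℕ} (u : V d) (e : Edge d) : Edge d :=
  ⟨Sym2.map (· + u) e.1, by
    obtain ⟨x, y, hxy, he⟩ := e.2
    refine ⟨x + u, y + u, ?_, ?_⟩
    · show norm1 (x + u - (y + u)) = 1
      rw [add_sub_add_right_eq_sub]; exact hxy
    · rw [he, Sym2.map_pair_eq]⟩

/-- The shift `θ_u` acting on configurations indexed by edges. -/
def shiftC {d : ℕ} {X : Type*} (u : V d) (ξ : Edge d → X) : Edge d → X :=
  fun e => ξ (shiftEdge u e)

/-- An open step between two adjacent vertices. -/
def OpenStep {d : ℕ} (ω : ΩE d) (x y : V d) : Prop := ∃ h : Adj x y, ω (edgeMk h) = true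

/-- A (simple) lattice path: a nonempty list of distinct vertices, consecutive ones adjacent. -/
def IsLatticePath {d : ℕ} (l : List (V d)) : Prop := l ≠ [] ∧ l.Nodup ∧ l.Chain' Adj

/-- A simple path all of whose edges are open in `ω`. -/
def IsOpenPath {d : ℕ} (ω : ΩE d) (l : List (V d)) : Prop :=
  l ≠ [] ∧ l.Nodup ∧ l.Chain' (OpenStep ω)

/-- An open path from `x` to `y`. -/
def PathFrom {d : ℕ} (ω : ΩE d) (x y : V d) (l : List (V d)) : Prop :=
  IsOpenPath ω l ∧ l.head? = some x ∧ l.getLast? = some y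

/-- Passage time of the edge joining `x` and `y` (junk value `0` if not adjacent). -/
noncomputable def edgeTime {d : ℕ} (η : ΩS d) (x y : V d) : ℝ≥0∞ :=
  if h : Adj x y then (η (edgeMk h) : ℝ≥0∞) else 0

/-- The passage time `Σ_{e ∈ γ} η_e` of a path. -/
noncomputable def pathTime {d : ℕ} (η : ΩS d) (l : List (V d)) : ℝ≥0∞ :=
  ((l.zip l.tail).map (fun q => edgeTime η q.1 q.2)).sum

/-- The travel time `d(x,y)(ω,η)`, equal to `+∞` when no open path joins `x` to `y`. -/
noncomputable def travelTime {d : ℕ} (ω : ΩE d) (η : ΩS d) (x y : V d) : ℝ≥0∞ :=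
  sInf {r | ∃ l, PathFrom ω x y l ∧ pathTime η l = r}

/-- `x` and `y` are joined by an open path. -/
def Conn {d : ℕ} (ω : ΩE d) (x y : V d) : Prop := ∃ l, PathFrom ω x y l

/-- `x` belongs to an infinite open cluster (`x ↔ ∞`). -/
def ClusterInf {d : ℕ} (ω : ΩE d) (x : V d) : Prop :=
  ∀ n : ℕ, ∃ y, n ≤ norm1 (y - x) ∧ Conn ω x y

/-- The chemical distance `D(x,y)(ω)`: minimal number of edges of an open path. -/
noncomputable def chemDist {d : ℕ} (ω : ΩE d) (x y : V d) : ℕ∞ :=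
  sInf {r : ℕ∞ | ∃ l, PathFrom ω x y l ∧ r = ((l.length - 1 : ℕ) : ℕ∞)}

/-- `P` is the product Bernoulli measure with parameter `p` on `Ω_E`. -/
def IsBernoulli {d : ℕ} (p : ℝ) (P : Measure (ΩE d)) : Prop :=
  IsProbabilityMeasure P ∧
    ∀ (s : Finset (Edge d)) (f : Edge d → Bool),
      P {ω | ∀ e ∈ s, ω e = f e} = ∏ e ∈ s, ENNReal.ofReal (if f e then p else 1 - p)

/-- The critical probability `p_c(d)` of Bernoulli bond percolation on `ℤ^d`. -/
noncomputable def pc (d : ℕ) : ℝ :=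
  sSup {q : ℝ | q ∈ Icc (0:ℝ) 1 ∧
    ∀ P : Measure (ΩE d), IsBernoulli q P → P {ω | ClusterInf ω 0} = 0}

/-- `𝕊_ν` is stationary and ergodic for the translations of the grid. -/
def StatErg {d : ℕ} (Sν : Measure (ΩS d)) : Prop :=
  (∀ u : V d, MeasurePreserving (shiftC u) Sν Sν) ∧
    ∀ A : Set (ΩS d), MeasurableSet A → (∀ u : V d, shiftC u ⁻¹' A = A) →
      Sν A = 0 ∨ Sν A = 1

/-- Condition `(H_α)`. -/
def HAlpha {d : ℕ} (Sν : Measure (ΩS d)) (α : ℝ) : Prop :=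
  ∃ A B : ℝ, 0 < A ∧ 0 < B ∧ ∀ Λ : Finset (Edge d),
    Sν {η | B * Λ.card ≤ ∑ e ∈ Λ, (η e : ℝ)} ≤ ENNReal.ofReal (A / (Λ.card : ℝ) ^ α)

/-- The moment assumptions: uniformly bounded first moments and `(H_α)` for some `α > 1`. -/
def Moment {d : ℕ} (Sν : Measure (ΩS d)) : Prop :=
  (∃ m : ℝ, ∀ e : Edge d, ∫ η, (η e : ℝ) ∂Sν ≤ m) ∧ ∃ α : ℝ, 1 < α ∧ HAlpha Sν α

/-- Simultaneous shift of the environment and the passage times. -/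
def shiftPair {d : ℕ} (u : V d) (z : ΩE d × ΩS d) : ΩE d × ΩS d :=
  (shiftC u z.1, shiftC u z.2)

/-- `T^B_u(ω) = inf {n ≥ 1 : θ_{nu} ω ∈ B}`. -/
noncomputable def TB {d : ℕ} (B : Set (ΩE d)) (u : V d) (ω : ΩE d) : ℕ :=
  sInf {n : ℕ | 1 ≤ n ∧ shiftC ((n : ℤ) • u) ω ∈ B}

/-- The induced transformation `Θ^B_u`. -/
noncomputable def ThetaB {d : ℕ} (B : Set (ΩE d)) (u : V d) (z : ΩE d × ΩS d) : ΩE d × ΩS d :=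
  shiftPair ((TB B u z.1 : ℤ) • u) z

/-- `T^B_{n,u} = Σ_{k<n} T^B_u ∘ (Θ^B_u)^k`. -/
noncomputable def TBn {d : ℕ} (B : Set (ΩE d)) (u : V d) (n : ℕ) (z : ΩE d × ΩS d) : ℕ :=
  ∑ k ∈ Finset.range n, TB B u ((ThetaB B u)^[k] z).1

/-- The conditioned measure `ℙ̄_B = ℙ(· ∩ (B × Ω_S)) / ℙ_p(B)`. -/
noncomputable def Pbar {d : ℕ} (Pp : Measure (ΩE d)) (Sν : Measure (ΩS d)) [SFinite Sν]
    (B : Set (ΩE d)) : Measure (ΩE d × ΩS d) :=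
  (Pp B)⁻¹ • ((Pp.prod Sν).restrict (B ×ˢ univ))

/-- The event `{0 ↔ ∞}`. -/
def A0 (d : ℕ) : Set (ΩE d) := {ω | ClusterInf ω 0}

/-- `μ` is the semi-norm of directional asymptotic speeds:
`μ(0) = 0` and for `u ≠ 0`, `d(0, T^A_{n,u} u)/n → μ(u)/ℙ_p(0↔∞)` ℙ̄-a.s. -/
def MuSpec {d : ℕ} (Pp : Measure (ΩE d)) (Sν : Measure (ΩS d)) [SFinite Sν]
    (μ : V d → ℝ) : Prop :=
  μ 0 = 0 ∧ ∀ u : V d, u ≠ 0 →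
    ∀ᵐ z ∂(Pbar Pp Sν (A0 d)),
      Tendsto (fun n : ℕ =>
          (travelTime z.1 z.2 0 ((TBn (A0 d) u n z : ℤ) • u)).toReal / n)
        atTop (𝓝 (μ u / (Pp (A0 d)).toReal))

/-- The coexistence event `Coex(x,y)`. -/
def Coex {d : ℕ} (ω : ΩE d) (η : ΩS d) (x y : V d) : Prop :=
  {z : V d | travelTime ω η x z < travelTime ω η y z}.Infinite ∧
    {z : V d | travelTime ω η y z < travelTime ω η x z}.Infinite

/-- The separated coexistence event `Sep-Coex(x,y)`. -/
def SepCoex {d : ℕ} (ω : ΩE d) (η : ΩS d) (x y : V d) : Prop :=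
  Coex ω η x y ∧ ∀ z : V d, travelTime ω η x z = travelTime ω η y z →
    travelTime ω η x z = ⊤

/-- The vertex segment `(g n, …, g p)` of an infinite path. -/
def seg {d : ℕ} (g : ℕ → V d) (n p : ℕ) : List (V d) :=
  (List.range (p + 1 - n)).map (fun i => g (n + i))

/-- A semi-infinite geodesic for the travel time `d`. -/
def SemiGeo {d : ℕ} (ω : ΩE d) (η : ΩS d) (g : ℕ → V d) : Prop :=
  ∀ n p : ℕ, n ≤ p → PathFrom ω (g n) (g p) (seg g n p) ∧
    pathTime η (seg g n p) = travelTime ω η (g n) (g p)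

/-- A semi-infinite geodesic for the chemical distance `D`. -/
def DSemiGeo {d : ℕ} (ω : ΩE d) (g : ℕ → V d) : Prop :=
  ∀ n p : ℕ, n ≤ p → PathFrom ω (g n) (g p) (seg g n p) ∧
    chemDist ω (g n) (g p) = ((p - n : ℕ) : ℕ∞)

/-- The σ-algebra `𝓕_{Λ^c}` generated by the passage times of edges outside `Λ`. -/
def FLc {d : ℕ} (Λ : Finset (Edge d)) : MeasurableSpace (ΩS d) :=
  MeasurableSpace.comap (fun η (e : {e : Edge d // e ∉ Λ}) => η e.1) inferInstance

/-- Non-atomicity: `𝕊_ν(η_e = a | 𝓕_{Λ^c}) = 0` a.s. -/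
def NonAtomic {d : ℕ} (Sν : Measure (ΩS d)) : Prop :=
  ∀ Λ : Finset (Edge d), ∀ e ∈ Λ, ∀ a : ℝ≥0, ∀ G : Set (ΩS d),
    MeasurableSet[FLc Λ] G → Sν ({η | η e = a} ∩ G) = 0

/-- Finite energy: `𝕊_ν(η_e ≤ ε | 𝓕_{Λ^c}) > 0` a.s. -/
def FiniteEnergy {d : ℕ} (Sν : Measure (ΩS d)) : Prop :=
  ∀ Λ : Finset (Edge d), ∀ e ∈ Λ, ∀ ε : ℝ≥0, 0 < ε → ∀ G : Set (ΩS d),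
    MeasurableSet[FLc Λ] G → 0 < Sν G → 0 < Sν ({η | η e ≤ ε} ∩ G)

/-- Conditional unboundedness: `𝕊_ν(η_e ≥ M | 𝓕_{Λ^c}) > 0` a.s. -/
def CondUnbounded {d : ℕ} (Sν : Measure (ΩS d)) : Prop :=
  ∀ Λ : Finset (Edge d), ∀ e ∈ Λ, ∀ M : ℝ≥0, ∀ G : Set (ΩS d),
    MeasurableSet[FLc Λ] G → 0 < Sν G → 0 < Sν ({η | M ≤ η e} ∩ G)

/-- The passage times take values in `S ⊆ ℤ₊` a.s. -/
def DiscreteSupport {d : ℕ} (Sν : Measure (ΩS d)) (S : Set ℕ) : Prop :=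
  Sν {η | ∀ e, ∃ n ∈ S, η e = (n : ℝ≥0)} = 1

/-- Discrete finite energy: `𝕊_ν(η_Λ = e_Λ | 𝓕_{Λ^c}) > 0` a.s. for every `e_Λ ∈ S^Λ`. -/
def DiscreteFiniteEnergy {d : ℕ} (Sν : Measure (ΩS d)) (S : Set ℕ) : Prop :=
  ∀ Λ : Finset (Edge d), ∀ f : Edge d → ℕ, (∀ e, f e ∈ S) → ∀ G : Set (ΩS d),
    MeasurableSet[FLc Λ] G → 0 < Sν G →
      0 < Sν ({η | ∀ e ∈ Λ, η e = (f e : ℝ≥0)} ∩ G)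

/-- `𝕊_ν` is a product measure. -/
def IsProductMeasure {d : ℕ} (Sν : Measure (ΩS d)) : Prop :=
  ∀ (Λ : Finset (Edge d)) (A : Edge d → Set ℝ≥0), (∀ e, MeasurableSet (A e)) →
    Sν {η | ∀ e ∈ Λ, η e ∈ A e} = ∏ e ∈ Λ, Sν {η | η e ∈ A e}

/-- The strengthened integrability conditions (a), (b), (c). -/
def StrongIntegrability {d : ℕ} (p : ℝ) (Sν : Measure (ΩS d)) : Prop :=
  (∃ α : ℝ, (d : ℝ)^2 + 2 * d - 1 < α ∧ HAlpha Sν α) ∨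
  (p = 1 ∧ ∃ α : ℝ, (d : ℝ) < α ∧ ∃ C : ℝ, ∀ e : Edge d,
    ∫ η, (η e : ℝ) ^ α ∂Sν ≤ C) ∨
  (p = 1 ∧ IsProductMeasure Sν ∧ ∃ C : ℝ, ∀ e : Edge d,
    ∫ η, (η e : ℝ) ^ 2 ∂Sν ≤ C)

/-- The set of edges of a path. -/
def pathEdges {d : ℕ} (l : List (V d)) : Set (Sym2 (V d)) :=
  {e | ∃ q ∈ l.zip l.tail, e = s(q.1, q.2)}

/-- The passage time of a fixed path in the configuration `(ω,η)`:
`d(γ) = Σ_{e∈γ} η_e` if `γ` is open, `+∞` otherwise. -/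
noncomputable def pathCost {d : ℕ} (ω : ΩE d) (η : ΩS d) (l : List (V d)) : ℝ≥0∞ :=
  if l.Chain' (OpenStep ω) then pathTime η l else ⊤

/-! Travel times vanish inside `C`, so by the triangle inequality `d(s,c)` and `d(c,z)` do not
depend on `c ∈ C`. When every open path from `s` to `z` meets `C`, splitting each such path at its
point of `C` gives `d(s,z) = d(s,c) + d(c,z)`. For `z` outside the finite set `R ∪ C` this holds
for `s = x` and `s = y`, so whether `d(x,z) < d(y,z)` or `d(y,z) < d(x,z)` is decided by comparing
`d(x,c)` with `d(y,c)`, independently of `z`: one of the two sets of `Coex(x,y)` lies in `R ∪ C`. -/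

lemma IsOpenPath.isLatticePath {d : ℕ} {ω : ΩE d} {l : List (V d)} (h : IsOpenPath ω l) :
    IsLatticePath l :=
  ⟨h.1, h.2.1, h.2.2.imp fun _ _ hstep => hstep.1⟩

section TravelTime

variable {d : ℕ} {ω : ΩE d} (η : ΩS d)

@[simp]
lemma pathTime_singleton (v : V d) : pathTime η [v] = 0 := by
  simp [pathTime]

lemma pathTime_cons_cons (u v : V d) (l : List (V d)) :
    pathTime η (u :: v :: l) = edgeTime η u v + pathTime η (v :: l) := by
  simp [pathTime]

lemma pathTime_append_cons (a : List (V d)) (v : V d) (b : List (V d)) :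
    pathTime η (a ++ v :: b) = pathTime η (a ++ [v]) + pathTime η (v :: b) := by
  induction a with
  | nil => simp
  | cons u a ih =>
    cases a with
    | nil => simp [pathTime_cons_cons]
    | cons w a =>
      simp only [List.cons_append] at ih ⊢
      rw [pathTime_cons_cons, pathTime_cons_cons, ih, add_assoc]

lemma travelTime_le_pathTime {x z : V d} {l : List (V d)} (h : PathFrom ω x z l) :
    travelTime ω η x z ≤ pathTime η l :=
  sInf_le ⟨l, h, rfl⟩

@[simp]
lemma travelTime_self (x : V d) : travelTime ω η x x = 0 :=
  nonpos_iff_eq_zero.mp <| by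
    simpa using travelTime_le_pathTime (ω := ω) η
      ⟨⟨List.cons_ne_nil x [], List.nodup_singleton x, .singleton x⟩, rfl, rfl⟩

/-- A simple path from `w` either avoids `u`, and then extends by the open edge `uw`, or passes
through `u`, and then its suffix from `u` is a cheaper path from `u`. -/
lemma travelTime_le_edgeTime_add {u w : V d} (huw : OpenStep ω u w) (z : V d) :
    travelTime ω η u z ≤ edgeTime η u w + travelTime ω η w z := by
  rw [add_comm, show travelTime ω η w z = sInf _ from rfl, ENNReal.sInf_add]
  refine le_iInf₂ fun _ ⟨l, ⟨⟨hne, hnd, hch⟩, hw, hz⟩, hl⟩ => hl ▸ ?_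
  by_cases hu : u ∈ l
  · obtain ⟨a, b, rfl⟩ := List.append_of_mem hu
    have hsuffix : PathFrom ω u z (u :: b) :=
      ⟨⟨List.cons_ne_nil u b, hnd.sublist (List.sublist_append_right a _),
        hch.right_of_append⟩, rfl, by rw [← hz, List.getLast?_append_of_ne_nil _ (by simp)]⟩
    calc travelTime ω η u z ≤ pathTime η (u :: b) := travelTime_le_pathTime η hsuffix
      _ ≤ pathTime η (a ++ u :: b) := by rw [pathTime_append_cons]; exact le_add_self
      _ ≤ _ := le_self_add
  · obtain ⟨t, rfl⟩ : ∃ t, l = w :: t := by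
      cases l with
      | nil => simp at hw
      | cons v t => exact ⟨t, by simpa using hw⟩
    have hcons : PathFrom ω u z (u :: w :: t) :=
      ⟨⟨List.cons_ne_nil u _, hnd.cons hu, hch.cons_cons huw⟩, rfl, by simpa using hz⟩
    calc travelTime ω η u z ≤ pathTime η (u :: w :: t) := travelTime_le_pathTime η hcons
      _ = _ := by rw [pathTime_cons_cons, add_comm]

lemma travelTime_le_pathTime_add_of_isChain {x w : V d} {l : List (V d)}
    (hch : l.IsChain (OpenStep ω)) (hx : l.head? = some x) (hw : l.getLast? = some w)
    (z : V d) : travelTime ω η x z ≤ pathTime η l + travelTime ω η w z := by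
  induction l generalizing x with
  | nil => simp at hx
  | cons u l ih =>
    obtain rfl : u = x := by simpa using hx
    cases l with
    | nil =>
      obtain rfl : u = w := by simpa using hw
      simp
    | cons v l =>
      rw [pathTime_cons_cons, add_assoc]
      exact (travelTime_le_edgeTime_add η hch.rel z).trans
        (add_le_add le_rfl (ih hch.tail rfl (by simpa using hw)))

lemma travelTime_le_pathTime_of_isChain {x z : V d} {l : List (V d)}
    (hch : l.IsChain (OpenStep ω)) (hx : l.head? = some x) (hz : l.getLast? = some z) :
    travelTime ω η x z ≤ pathTime η l := by
  simpa using travelTime_le_pathTime_add_of_isChain η hch hx hz z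

lemma travelTime_le_add (x w z : V d) :
    travelTime ω η x z ≤ travelTime ω η x w + travelTime ω η w z := by
  rw [show travelTime ω η x w = sInf _ from rfl, ENNReal.sInf_add]
  exact le_iInf₂ fun _ ⟨l, ⟨⟨_, _, hch⟩, hx, hw⟩, hl⟩ =>
    hl ▸ travelTime_le_pathTime_add_of_isChain η hch hx hw z

lemma travelTime_add_travelTime_le_pathTime {x z c : V d} {l : List (V d)}
    (hch : l.IsChain (OpenStep ω)) (hx : l.head? = some x) (hz : l.getLast? = some z)
    (hc : c ∈ l) : travelTime ω η x c + travelTime ω η c z ≤ pathTime η l := by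
  obtain ⟨a, b, rfl⟩ := List.append_of_mem hc
  rw [pathTime_append_cons]
  have hprefix : (a ++ [c]).IsChain (OpenStep ω) := by
    rw [List.append_cons] at hch
    exact hch.left_of_append
  gcongr
  · exact travelTime_le_pathTime_of_isChain η hprefix (by cases a <;> simp_all) (by simp)
  · exact travelTime_le_pathTime_of_isChain η hch.right_of_append rfl
      (by rw [← hz, List.getLast?_append_of_ne_nil _ (by simp)])

variable {C : Set (V d)} (hC : ∀ c ∈ C, ∀ c' ∈ C, travelTime ω η c c' = 0)
include hC

lemma travelTime_eq_of_mem_right (u : V d) {c c' : V d} (hc : c ∈ C) (hc' : c' ∈ C) :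
    travelTime ω η u c = travelTime ω η u c' := by
  have hle : ∀ a ∈ C, ∀ b ∈ C, travelTime ω η u a ≤ travelTime ω η u b := fun a ha b hb =>
    (travelTime_le_add η u b a).trans_eq (by rw [hC b hb a ha, add_zero])
  exact le_antisymm (hle c hc c' hc') (hle c' hc' c hc)

lemma travelTime_eq_of_mem_left (z : V d) {c c' : V d} (hc : c ∈ C) (hc' : c' ∈ C) :
    travelTime ω η c z = travelTime ω η c' z := by
  have hle : ∀ a ∈ C, ∀ b ∈ C, travelTime ω η a z ≤ travelTime ω η b z := fun a ha b hb =>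
    (travelTime_le_add η a b z).trans_eq (by rw [hC a ha b hb, zero_add])
  exact le_antisymm (hle c hc c' hc') (hle c' hc' c hc)

lemma travelTime_eq_add_of_separates {s z c : V d} (hc : c ∈ C)
    (hsep : ∀ l, PathFrom ω s z l → ∃ c' ∈ C, c' ∈ l) :
    travelTime ω η s z = travelTime ω η s c + travelTime ω η c z := by
  refine le_antisymm (travelTime_le_add η s c z) (le_sInf ?_)
  rintro _ ⟨l, hl, rfl⟩
  obtain ⟨c', hc', hc'l⟩ := hsep l hl
  rw [travelTime_eq_of_mem_right η hC s hc hc', travelTime_eq_of_mem_left η hC z hc hc']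
  exact travelTime_add_travelTime_le_pathTime η hl.1.2.2 hl.2.1 hl.2.2 hc'l

end TravelTime

theorem stmt17_general (d : ℕ) (ω : ΩE d) (η : ΩS d) (x y : V d)
    (C R : Set (V d)) (hCfin : C.Finite) (hCne : C.Nonempty)
    (hC0 : ∀ c ∈ C, ∀ c' ∈ C, travelTime ω η c c' = 0)
    (hRfin : R.Finite)
    (hblock : ∀ s ∈ ({x, y} : Set (V d)), ∀ l : List (V d), IsLatticePath l →
      l.head? = some s → ∀ z : V d, l.getLast? = some z → z ∉ R ∪ C →
        ∃ c ∈ C, c ∈ l) :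
    ¬ Coex ω η x y := by
  obtain ⟨c, hc⟩ := hCne
  have hsplit : ∀ s ∈ ({x, y} : Set (V d)), ∀ z ∉ R ∪ C,
      travelTime ω η s z = travelTime ω η s c + travelTime ω η c z := fun s hs z hz =>
    travelTime_eq_add_of_separates η hC0 hc fun l hl =>
      hblock s hs l hl.1.isLatticePath hl.2.1 z hl.2.2 hz
  rintro ⟨hxy, hyx⟩
  obtain ⟨z, hzxy, hz⟩ := hxy.exists_notMem_finite (hRfin.union hCfin)
  obtain ⟨z', hzyx, hz'⟩ := hyx.exists_notMem_finite (hRfin.union hCfin)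
  simp only [Set.mem_ofPred_eq, hsplit x (by simp) _ hz, hsplit y (by simp) _ hz,
    hsplit x (by simp) _ hz', hsplit y (by simp) _ hz'] at hzxy hzyx
  exact lt_asymm (lt_of_add_lt_add_right hzxy) (lt_of_add_lt_add_right hzyx)

/-- Remark: if a finite set `C` of mutually `d`-equidistant (at distance `0`) points
surrounds the finite set `R ∋ x, y` — every path from `x` or `y` to the outside of
`R ∪ C` must meet `C` — then coexistence of `x` and `y` fails. -/
theorem stmt17 (d : ℕ) (hd : 2 ≤ d) (ω : ΩE d) (η : ΩS d) (x y : V d) (hxy : x ≠ y)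
    (C R : Set (V d)) (hCfin : C.Finite) (hCne : C.Nonempty)
    (hC0 : ∀ c ∈ C, ∀ c' ∈ C, travelTime ω η c c' = 0)
    (hRfin : R.Finite) (hxR : x ∈ R) (hyR : y ∈ R)
    (hblock : ∀ s ∈ ({x, y} : Set (V d)), ∀ l : List (V d), IsLatticePath l →
      l.head? = some s → ∀ z : V d, l.getLast? = some z → z ∉ R ∪ C →
        ∃ c ∈ C, c ∈ l) :
    ¬ Coex ω η x y :=
  stmt17_general d ω η x y C R hCfin hCne hC0 hRfin hblock

end GM
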